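/- Let ρ be a Borel probability measure on ℝ, ω ∈ ℝ, and γ ∈ ℝ such that Z = ∫ exp(γ·(y − ω)₊) dρ(y) < ∞. Let μ_γ be the exponentially tilted measure with density (1/Z)·exp(γ·(y − ω)₊) with respect to ρ, and suppose ∫ (y − ω)₊ dμ_γ(y) = f̄. Then for every Borel probability measure μ on ℝ absolutely continuous with respect to ρ with ∫ (y − ω)₊ dμ(y) = f̄ and KL(μ ‖ ρ) < ∞, one has KL(μ_γ ‖ ρ) ≤ KL(μ ‖ ρ). That is, the tilted density p_μ(y) proportional to p_ρ(y)·e^{γ(y−ω)} for y > ω and to p_ρ(y) for y ≤ ω minimizes KL divergence to ρ subject to a single call-option (ReLU) expectation constraint. -/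

import Mathlib

/-!
Tilting `ρ` by `g` gives `log (dμ_g/dρ) = g - log Z`, so `KL(μ_g ‖ ρ) = ∫ g dμ_g - log Z`. For any
competitor `μ`, Gibbs' inequality `KL(μ ‖ μ_g) ≥ 0` unfolds to the Donsker–Varadhan bound
`∫ g dμ - log Z ≤ KL(μ ‖ ρ)`. When `g = γ (y - ω)₊` and both measures give `(y - ω)₊` the same mean,
the left-hand side is exactly `KL(μ_g ‖ ρ)`.
-/

open MeasureTheory

/-- The Kullback–Leibler divergence `KL(μ ‖ ν) = ∫ log (dμ/dν) dμ`. -/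
noncomputable def klDiv (μ ν : Measure ℝ) : ℝ :=
  ∫ x, Real.log ((μ.rnDeriv ν x).toReal) ∂μ

open Real

section Tilted

variable {α : Type*} {mα : MeasurableSpace α} {μ ρ : Measure α}

lemma integral_llr_nonneg [IsProbabilityMeasure μ] [IsProbabilityMeasure ρ] (hμρ : μ ≪ ρ)
    (h_int : Integrable (llr μ ρ) μ) : 0 ≤ ∫ x, llr μ ρ x ∂μ := by
  simpa using InformationTheory.integral_llr_add_sub_measure_univ_nonneg hμρ h_int

lemma integral_sub_log_integral_exp_le_integral_llr [IsProbabilityMeasure μ]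
    [IsProbabilityMeasure ρ] {g : α → ℝ} (hμρ : μ ≪ ρ) (h_int : Integrable (llr μ ρ) μ)
    (hgμ : Integrable g μ) (hg : Integrable (fun x ↦ exp (g x)) ρ) :
    ∫ x, g x ∂μ - log (∫ x, exp (g x) ∂ρ) ≤ ∫ x, llr μ ρ x ∂μ := by
  have : IsProbabilityMeasure (ρ.tilted g) := isProbabilityMeasure_tilted hg
  have h_gibbs := integral_llr_nonneg (hμρ.trans (absolutelyContinuous_tilted hg))
    (integrable_llr_tilted_right hμρ hgμ h_int hg)
  rw [integral_llr_tilted_right hμρ hgμ hg h_int] at h_gibbs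
  linarith

/-- The hypothesis `hgμ` only matters when `g` is `ρ.tilted g`-integrable: otherwise the left-hand
side is the junk value `0`. -/
theorem integral_llr_tilted_le [IsProbabilityMeasure μ] [IsProbabilityMeasure ρ] {g : α → ℝ}
    (hμρ : μ ≪ ρ) (h_int : Integrable (llr μ ρ) μ) (hg : Integrable (fun x ↦ exp (g x)) ρ)
    (hgμ : Integrable g (ρ.tilted g) → Integrable g μ)
    (h_eq : ∫ x, g x ∂μ = ∫ x, g x ∂(ρ.tilted g)) :
    ∫ x, llr (ρ.tilted g) ρ x ∂(ρ.tilted g) ≤ ∫ x, llr μ ρ x ∂μ := by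
  have : IsProbabilityMeasure (ρ.tilted g) := isProbabilityMeasure_tilted hg
  have h_llr : llr (ρ.tilted g) ρ =ᵐ[ρ.tilted g] fun x ↦ g x - log (∫ x, exp (g x) ∂ρ) :=
    (tilted_absolutelyContinuous ρ g).ae_le (log_rnDeriv_tilted_left_self hg)
  by_cases hgt : Integrable g (ρ.tilted g)
  · rw [integral_congr_ae h_llr, integral_sub hgt (integrable_const _), integral_const,
      probReal_univ, one_smul, ← h_eq]
    exact integral_sub_log_integral_exp_le_integral_llr hμρ h_int (hgμ hgt) hg
  · have h_not_int : ¬ Integrable (llr (ρ.tilted g) ρ) (ρ.tilted g) := fun h ↦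
      hgt <| ((h.congr h_llr).add (integrable_const (log (∫ x, exp (g x) ∂ρ)))).congr
        (Filter.Eventually.of_forall fun x ↦ sub_add_cancel _ _)
    rw [integral_undef h_not_int]
    exact integral_llr_nonneg hμρ h_int

end Tilted

lemma integrable_of_integral_eq_of_nonneg {α : Type*} {mα : MeasurableSpace α}
    {μ ν : Measure α} {f : α → ℝ} (hf : 0 ≤ f) (hμν : μ ≪ ν) (hfν : Integrable f ν)
    (h : ∫ x, f x ∂μ = ∫ x, f x ∂ν) : Integrable f μ := by
  by_contra hfμ
  rw [integral_undef hfμ, eq_comm, integral_eq_zero_iff_of_nonneg hf hfν] at h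
  exact hfμ ((integrable_zero _ _ _).congr (hμν.ae_eq h).symm)

/-- **The exponentially tilted measure minimizes KL divergence under a single
ReLU (call-option) expectation constraint.** -/
theorem stmt_4 (ρ : Measure ℝ) [IsProbabilityMeasure ρ] (ω γ fbar : ℝ)
    (hZ : Integrable (fun y => Real.exp (γ * max (y - ω) 0)) ρ)
    (hcal : ∫ y, max (y - ω) 0 ∂(ρ.tilted (fun y => γ * max (y - ω) 0)) = fbar) :
    ∀ μ : Measure ℝ, IsProbabilityMeasure μ → μ ≪ ρ →
      (∫ y, max (y - ω) 0 ∂μ) = fbar →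
      Integrable (fun x => Real.log ((μ.rnDeriv ρ x).toReal)) μ →
      klDiv (ρ.tilted (fun y => γ * max (y - ω) 0)) ρ ≤ klDiv μ ρ := by
  intro μ _ hμρ hμcal h_int
  have h_eq : ∫ y, γ * max (y - ω) 0 ∂μ
      = ∫ y, γ * max (y - ω) 0 ∂(ρ.tilted fun y => γ * max (y - ω) 0) := by
    rw [integral_const_mul, integral_const_mul, hμcal, hcal]
  refine integral_llr_tilted_le hμρ h_int hZ (fun hgt ↦ ?_) h_eq
  rcases eq_or_ne γ 0 with rfl | hγ
  · simp
  · rw [integrable_const_mul_iff hγ.isUnit] at hgt ⊢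
    exact integrable_of_integral_eq_of_nonneg (fun y ↦ le_max_right _ _)
      (hμρ.trans (absolutelyContinuous_tilted hZ)) hgt (by rw [hμcal, hcal])
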